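/- If X is a compact metric space admitting an (n+1, n)-expansive homeomorphism with n ≥ 3, then X is a finite set. -/

import Mathlib

/-!
If `f` is not positively expansive with constant `δ`, some pair `p ≠ q` stays `δ`-close along its
forward orbit; if `f⁻¹` is not, some pair `r ≠ s` stays `δ`-close along its backward orbit. In an
infinite space, put `p, q, r, s` into a set of `n + 1 ≥ 4` points: every iterate of it contains a
`δ`-close pair, so its `δ`-cardinality is at most `n`. Hence `f` or `f⁻¹` is positively expansive.

A positively expansive homeomorphism `g` of a compact space lives on a finite space. By compactness
the expansion happens within a uniform time, which makes `g⁻¹` contracting on a fixed scale `η`: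
`g⁻ᴺ` shrinks `η`-balls to diameter `< ε`. So the finitely many `η/2`-balls covering `X` bound
the number of points of `X`, whatever `ε` is.
-/

open Set Function Uniformity

variable {X : Type*} [MetricSpace X]

/-- The `k`-th iterate (`k ∈ ℤ`) of a homeomorphism, as a function. -/
noncomputable def hiter (f : X ≃ₜ X) (k : ℤ) : X → X := ⇑(f.toEquiv ^ k)

/-- A set is `δ`-separated if distinct points are at distance `> δ`. -/
def IsSeparated' (δ : ℝ) (B : Set X) : Prop :=
  ∀ x ∈ B, ∀ y ∈ B, x ≠ y → δ < dist x y

/-- The `δ`-cardinality of a set: sup of cardinalities of `δ`-separated subsets. -/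
noncomputable def dCard (δ : ℝ) (A : Set X) : ℕ∞ :=
  ⨆ B ∈ {B : Set X | B ⊆ A ∧ IsSeparated' δ B}, B.encard

/-- `(m,n)`-expansiveness with a given expansive constant `δ`. -/
def MNExpansiveWith (f : X ≃ₜ X) (m n : ℕ) (δ : ℝ) : Prop :=
  ∀ A : Set X, A.encard = m → ∃ k : ℤ, (n : ℕ∞) < dCard δ (hiter f k '' A)

/-- `(m,n)`-expansiveness. -/
def MNExpansive (f : X ≃ₜ X) (m n : ℕ) : Prop :=
  ∃ δ > 0, MNExpansiveWith f m n δ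

lemma hiter_injective (f : X ≃ₜ X) (k : ℤ) : Injective (hiter f k) :=
  (f.toEquiv ^ k).injective

lemma hiter_natCast (f : X ≃ₜ X) (n : ℕ) : hiter f n = f^[n] := by
  rw [hiter, zpow_natCast, Equiv.Perm.coe_pow]
  rfl

lemma hiter_neg_natCast (f : X ≃ₜ X) (n : ℕ) : hiter f (-n) = f.symm^[n] := by
  rw [hiter, zpow_neg, ← inv_zpow, zpow_natCast, Equiv.Perm.coe_pow]
  rfl

lemma not_isSeparated'_image {δ : ℝ} {g : X → X} (hg : Injective g) {A : Set X}
    {x y : X} (hx : x ∈ A) (hy : y ∈ A) (hxy : x ≠ y) (hδ : dist (g x) (g y) ≤ δ) :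
    ¬ IsSeparated' δ (g '' A) := fun hsep ↦
  (hsep _ (mem_image_of_mem g hx) _ (mem_image_of_mem g hy) (hg.ne hxy)).not_ge hδ

lemma dCard_le_of_encard_eq_add_one {δ : ℝ} {A : Set X} {n : ℕ} (hA : A.encard = n + 1)
    (hAδ : ¬ IsSeparated' δ A) : dCard δ A ≤ n := by
  refine iSup₂_le fun B ⟨hBA, hB⟩ ↦ ?_
  have hBA' : B ⊂ A := hBA.ssubset_of_ne (by rintro rfl; exact hAδ hB)
  have hlt := ((A.finite_of_encard_eq_coe (k := n + 1) (by simpa using hA)).subset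
    hBA).encard_lt_encard hBA'
  rw [hA] at hlt
  exact Order.le_of_lt_add_one hlt

def PosExpansiveWith (g : X → X) (δ : ℝ) : Prop :=
  ∀ x y, x ≠ y → ∃ n : ℕ, δ < dist (g^[n] x) (g^[n] y)

lemma finite_of_forall_exists_fiber_dist_lt {T : Type*} [Finite T]
    (h : ∀ ε > 0, ∃ φ : X → T, ∀ x y, φ x = φ y → dist x y < ε) : Finite X := by
  by_contra hX
  have : Infinite X := not_finite_iff_infinite.mp hX
  have := Fintype.ofFinite T
  obtain ⟨S, hS⟩ := Infinite.exists_subset_card_eq X (Fintype.card T + 1)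
  have hclose : ∀ ε > 0, ∃ x ∈ S, ∃ y ∈ S, x ≠ y ∧ dist x y < ε := by
    intro ε hε
    obtain ⟨φ, hφ⟩ := h ε hε
    obtain ⟨x, hx, y, hy, hxy, hφxy⟩ := Finset.exists_ne_map_eq_of_card_lt_of_maps_to
      (s := S) (t := Finset.univ) (by simp [hS]) (f := φ) (fun _ _ ↦ by simp)
    exact ⟨x, hx, y, hy, hxy, hφ x y hφxy⟩
  obtain ⟨x, hx, y, hy, hxy, -⟩ := hclose 1 one_pos
  have hsep : 0 < (S : Set X).infsep :=
    S.finite_toSet.infsep_pos_iff_nontrivial.2 ⟨x, hx, y, hy, hxy⟩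
  obtain ⟨x, hx, y, hy, hxy, hlt⟩ := hclose _ hsep
  exact hlt.not_ge (Set.infsep_le_dist_of_mem hx hy hxy)

lemma Homeomorph.exists_pos_forall_iterate_dist_lt [CompactSpace X] (g : X ≃ₜ X) (N : ℕ)
    {ε : ℝ} (hε : 0 < ε) :
    ∃ η > 0, ∀ k ≤ N, ∀ a b, dist (g^[k] a) (g^[k] b) < η → dist a b < ε := by
  have h : ∀ᶠ p in 𝓤 X, ∀ k ∈ Finset.range (N + 1),
      dist (g.symm^[k] p.1) (g.symm^[k] p.2) < ε := by
    refine (Finset.eventually_all _).2 fun k _ ↦ ?_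
    exact (CompactSpace.uniformContinuous_of_continuous (g.symm.continuous.iterate k))
      (Metric.dist_mem_uniformity hε)
  obtain ⟨η, hη, hηε⟩ := Metric.mem_uniformity_dist.1 h
  refine ⟨η, hη, fun k hk a b hab ↦ ?_⟩
  simpa only [(LeftInverse.iterate g.symm_apply_apply k) _] using
    hηε hab k (Finset.mem_range_succ_iff.2 hk)

namespace PosExpansiveWith

variable [CompactSpace X] {δ : ℝ}

lemma exists_uniform_time {g : X → X} (hg : PosExpansiveWith g δ) (hgc : Continuous g) {ε : ℝ}
    (hε : 0 < ε) : ∃ N, ∀ x y, ε ≤ dist x y → ∃ n ≤ N, δ < dist (g^[n] x) (g^[n] y) := by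
  let U : ℕ → Set (X × X) := fun N ↦
    ⋃ n ∈ Iic N, {p | δ < dist (g^[n] p.1) (g^[n] p.2)}
  have hU : ∀ N, IsOpen (U N) := fun N ↦ isOpen_biUnion fun n _ ↦
    isOpen_lt continuous_const (by fun_prop)
  have hcover : {p : X × X | ε ≤ dist p.1 p.2} ⊆ ⋃ N, U N := by
    rintro ⟨x, y⟩ hxy
    obtain ⟨n, hn⟩ := hg x y (dist_pos.1 (hε.trans_le hxy))
    exact mem_iUnion.2 ⟨n, mem_biUnion (mem_Iic.2 le_rfl) hn⟩
  have hmono : Monotone U := fun _ _ h ↦ biUnion_subset_biUnion_left (Iic_subset_Iic.2 h)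
  obtain ⟨N, hN⟩ := (isClosed_le continuous_const continuous_dist).isCompact.elim_directed_cover
    U hU hcover hmono.directed_le
  refine ⟨N, fun x y hxy ↦ ?_⟩
  simpa [U] using hN (show (x, y) ∈ {p : X × X | ε ≤ dist p.1 p.2} from hxy)

lemma backward_stable {g : X ≃ₜ X} (hg : PosExpansiveWith g δ) (hδ : 0 < δ) :
    ∃ η > 0, ∀ x y n, dist (g^[n] x) (g^[n] y) < η →
      ∀ m ≤ n, dist (g^[m] x) (g^[m] y) < δ := by
  obtain ⟨ε₁, hε₁, hstep⟩ := g.exists_pos_forall_iterate_dist_lt 1 hδ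
  obtain ⟨N, hN⟩ := hg.exists_uniform_time g.continuous (lt_min hδ hε₁)
  obtain ⟨η, hη, hnear⟩ := g.exists_pos_forall_iterate_dist_lt N (lt_min hδ hε₁)
  refine ⟨η, hη, fun x y n hn ↦ ?_⟩
  have hnear' : ∀ m ≤ n, n ≤ m + N → dist (g^[m] x) (g^[m] y) < min δ ε₁ := fun m hm hmN ↦
    hnear (n - m) (by omega) _ _ (by rwa [← iterate_add_apply, ← iterate_add_apply,
      Nat.sub_add_cancel hm])
  -- Going down from time `n`: a time `m` at which the orbits are `min δ ε₁`-apart would be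
  -- followed within the uniform time `N` by a time at which they are `δ`-apart, but all later
  -- times are already close, and time `m` itself is `δ`-close by continuity of `g⁻¹`.
  suffices h : ∀ i, ∀ m ≤ n, n ≤ m + i → dist (g^[m] x) (g^[m] y) < min δ ε₁ from
    fun m hm ↦ (h n m hm (by omega)).trans_le (min_le_left _ _)
  intro i
  induction i with
  | zero => exact fun m hm hmi ↦ hnear' m hm (by omega)
  | succ i ih =>
    intro m hm hmi
    by_cases hmN : n ≤ m + N
    · exact hnear' m hm hmN
    have hlater : ∀ j, 1 ≤ j → m + j ≤ n →
        dist (g^[j] (g^[m] x)) (g^[j] (g^[m] y)) < min δ ε₁ := fun j hj hjn ↦ by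
      rw [← iterate_add_apply, ← iterate_add_apply]
      exact ih (j + m) (by omega) (by omega)
    have hm_lt : dist (g^[m] x) (g^[m] y) < δ :=
      hstep 1 le_rfl _ _ ((hlater 1 le_rfl (by omega)).trans_le (min_le_right _ _))
    by_contra! hge
    obtain ⟨j, hjN, hj⟩ := hN _ _ hge
    rcases j with _ | j
    · exact hj.not_gt hm_lt
    · exact hj.not_gt ((hlater (j + 1) (by omega) (by omega)).trans_le (min_le_left _ _))

lemma exists_contraction {g : X ≃ₜ X} (hg : PosExpansiveWith g δ) (hδ : 0 < δ) :
    ∃ η > 0, ∀ ε > 0, ∃ N, ∀ x y, dist (g^[N] x) (g^[N] y) < η → dist x y < ε := by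
  obtain ⟨η, hη, hstable⟩ := hg.backward_stable hδ
  refine ⟨η, hη, fun ε hε ↦ ?_⟩
  obtain ⟨N, hN⟩ := hg.exists_uniform_time g.continuous hε
  refine ⟨N, fun x y hxy ↦ ?_⟩
  by_contra! hge
  obtain ⟨n, hn, hδn⟩ := hN x y hge
  exact hδn.not_gt (hstable x y N hxy n hn)

theorem finite {g : X ≃ₜ X} (hg : PosExpansiveWith g δ) (hδ : 0 < δ) : Finite X := by
  obtain ⟨η, hη, hcontract⟩ := hg.exists_contraction hδ
  obtain ⟨t, -, ht, hcover⟩ := (isCompact_univ (X := X)).finite_cover_balls (half_pos hη)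
  have := ht.to_subtype
  have hcenter : ∀ z, ∃ c : t, dist z (c : X) < η / 2 := fun z ↦ by
    simpa using hcover (mem_univ z)
  choose c hc using hcenter
  refine finite_of_forall_exists_fiber_dist_lt (T := t) fun ε hε ↦ ?_
  obtain ⟨N, hN⟩ := hcontract ε hε
  refine ⟨fun x ↦ c (g^[N] x), fun x y hxy ↦ hN x y ?_⟩
  calc dist (g^[N] x) (g^[N] y)
        ≤ dist (g^[N] x) (c (g^[N] x) : X) + dist (c (g^[N] y) : X) (g^[N] y) :=
        by rw [show c (g^[N] x) = c (g^[N] y) from hxy]; exact dist_triangle _ _ _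
    _ < η / 2 + η / 2 := add_lt_add (hc _) (dist_comm (g^[N] y) _ ▸ hc _)
    _ = η := add_halves η

end PosExpansiveWith

theorem MNExpansiveWith.posExpansiveWith_or [Infinite X] {f : X ≃ₜ X} {n : ℕ} {δ : ℝ}
    (hf : MNExpansiveWith f (n + 1) n δ) (hn : 3 ≤ n) :
    PosExpansiveWith f δ ∨ PosExpansiveWith f.symm δ := by
  classical
  by_contra! h
  obtain ⟨hpos, hneg⟩ := h
  simp only [PosExpansiveWith, not_forall, not_exists, not_lt] at hpos hneg
  obtain ⟨p, q, hpq, hp⟩ := hpos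
  obtain ⟨r, s, hrs, hr⟩ := hneg
  obtain ⟨A, hA, hcard⟩ := Infinite.exists_superset_card_eq ({p, q, r, s} : Finset X) (n + 1)
    (Finset.card_le_four.trans (by omega))
  obtain ⟨k, hk⟩ := hf A (by simp [hcard])
  refine hk.not_ge (dCard_le_of_encard_eq_add_one ?_ ?_)
  · rw [(hiter_injective f k).injOn.encard_image]
    simp [hcard]
  obtain ⟨m, rfl | rfl⟩ := Int.eq_nat_or_neg k
  · rw [hiter_natCast]
    exact not_isSeparated'_image (f.injective.iterate m) (hA (by simp)) (hA (by simp)) hpq (hp m)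
  · rw [hiter_neg_natCast]
    exact not_isSeparated'_image (f.symm.injective.iterate m) (hA (by simp)) (hA (by simp)) hrs
      (hr m)

theorem stmt9 [CompactSpace X] (n : ℕ) (hn : 3 ≤ n) (f : X ≃ₜ X)
    (hf : MNExpansive f (n + 1) n) : Finite X := by
  obtain ⟨δ, hδ, hfδ⟩ := hf
  rcases finite_or_infinite X with hX | hX
  · exact hX
  rcases hfδ.posExpansiveWith_or hn with h | h
  exacts [h.finite hδ, h.finite hδ]
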